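/- arXiv:2202.11879 — 2 statements merged into one kernel-verified Lean document; each statement's English description precedes it below -/
import Mathlib

section
/- If A is an n×n complex Hurwitz matrix, then det(-(A ⊗ I_n + I_n ⊗ conj(A))) is a strictly positive real number. -/
open Kronecker Matrix Polynomial Filter

/-- A square complex matrix is Hurwitz if all its eigenvalues have strictly
negative real part. -/
def IsHurwitz {m : Type*} [Fintype m] [DecidableEq m]
    (A : Matrix m m ℂ) : Prop :=
  ∀ μ ∈ A.charpoly.roots, μ.re < 0

lemma eval_charpoly' {m : Type*} [Fintype m] [DecidableEq m] {R : Type*} [CommRing R]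
    (M : Matrix m m R) (x : R) :
    M.charpoly.eval x = (x • (1 : Matrix m m R) - M).det := by
  rw [charpoly, eval_det, matPolyEquiv_charmatrix]
  simp [smul_eq_diagonal_mul]

lemma isHurwitz_det {m : Type*} [Fintype m] [DecidableEq m] {A : Matrix m m ℂ}
    (hA : IsHurwitz A) {x : ℂ}
    (hx : (x • (1 : Matrix m m ℂ) - A).det = 0) : x.re < 0 := by
  apply hA
  rw [mem_roots (A.charpoly_monic.ne_zero), IsRoot, eval_charpoly', hx]

lemma semiconj_pow' {R : Type*} [Ring R] {Y B D : R} (h : Y * D = B * Y) (k : ℕ) :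
    Y * D ^ k = B ^ k * Y := by
  induction k with
  | zero => simp
  | succ k ih => rw [pow_succ, pow_succ, ← mul_assoc, ih, mul_assoc, h, ← mul_assoc]

lemma semiconj_aeval' {m : Type*} [Fintype m] [DecidableEq m]
    {Y B D : Matrix m m ℂ} (h : Y * D = B * Y) (p : ℂ[X]) :
    Y * aeval D p = aeval B p * Y := by
  induction p using Polynomial.induction_on' with
  | add p q hp hq => rw [map_add, map_add, mul_add, add_mul, hp, hq]
  | monomial k a =>
      rw [aeval_monomial, aeval_monomial, Algebra.commutes a (D ^ k), ← mul_assoc,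
        semiconj_pow' h, mul_assoc, ← Algebra.commutes, ← mul_assoc, ← Algebra.commutes]

lemma det_aeval_ne_zero {m : Type*} [Fintype m] [DecidableEq m] {B : Matrix m m ℂ}
    (hB : IsHurwitz B) :
    (aeval (-Bᴴ) B.charpoly).det ≠ 0 := by
  obtain ⟨l, hl⟩ : ∃ l : List ℂ, (l : Multiset ℂ) = B.charpoly.roots :=
    ⟨B.charpoly.roots.toList, Multiset.coe_toList _⟩
  have hsp : B.charpoly = (l.map fun μ => X - C μ).prod := by
    rw [(IsAlgClosed.splits B.charpoly).eq_prod_roots_of_monic B.charpoly_monic,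
      ← hl, Multiset.map_coe, Multiset.prod_coe]
  rw [hsp, map_list_prod]
  intro h
  rw [show ((List.map (⇑(aeval (-Bᴴ))) (List.map (fun μ => X - Polynomial.C μ) l)).prod.det)
      = detMonoidHom (List.map (⇑(aeval (-Bᴴ))) (List.map (fun μ => X - Polynomial.C μ) l)).prod
      from rfl, map_list_prod (detMonoidHom (n := m) (R := ℂ)), List.map_map, List.map_map] at h
  have := List.prod_eq_zero_iff.mp h
  simp only [List.mem_map, Function.comp_apply] at this
  obtain ⟨μ, hμl, hμ⟩ := this
  have hμroot : μ ∈ B.charpoly.roots := by rw [← hl]; exact_mod_cast hμl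
  have hre : μ.re < 0 := hB μ hμroot
  rw [coe_detMonoidHom] at hμ
  have h1 : (aeval (-Bᴴ) (X - C μ) : Matrix m m ℂ) = -((B + (starRingEnd ℂ μ) • 1)ᴴ) := by
    simp [Algebra.algebraMap_eq_smul_one, conjTranspose_add, conjTranspose_smul]
    abel
  rw [h1, det_neg, det_conjTranspose, mul_eq_zero] at hμ
  rcases hμ with hμ | hμ
  · exact pow_ne_zero _ (neg_ne_zero.mpr one_ne_zero) hμ
  · rw [star_eq_zero] at hμ
    have h2 : B + (starRingEnd ℂ μ) • 1 = -(((-(starRingEnd ℂ μ)) • 1) - B) := by abel_nf; simp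
    rw [h2, det_neg, mul_eq_zero] at hμ
    rcases hμ with hμ | hμ
    · exact pow_ne_zero _ (neg_ne_zero.mpr one_ne_zero) hμ
    · have := isHurwitz_det hB hμ
      simp [Complex.neg_re, Complex.conj_re] at this
      linarith

lemma det_kroneckerSum_ne_zero {n : ℕ} {B : Matrix (Fin n) (Fin n) ℂ}
    (hB : IsHurwitz B) :
    (B ⊗ₖ (1 : Matrix (Fin n) (Fin n) ℂ) +
      (1 : Matrix (Fin n) (Fin n) ℂ) ⊗ₖ B.map (starRingEnd ℂ)).det ≠ 0 := by
  intro h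
  obtain ⟨v, hv0, hv⟩ := (Matrix.exists_mulVec_eq_zero_iff).mpr h
  set Y : Matrix (Fin n) (Fin n) ℂ := Matrix.of fun i j => v (i, j) with hY
  have key : B * Y + Y * Bᴴ = 0 := by
    ext i j
    have h2 := congrFun hv (i, j)
    simp [mulVec, dotProduct, Fintype.sum_prod_type, one_apply, mul_apply,
      conjTranspose_apply, add_mul, Finset.sum_add_distrib, mul_comm, ite_mul,
      Finset.sum_ite_eq, Finset.sum_ite_eq'] at h2 ⊢
    simp only [hY, of_apply]
    rw [← h2]
    simp only [mul_add, mul_ite, mul_zero, Finset.sum_add_distrib,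
      Finset.sum_ite_eq, Finset.sum_ite_eq', Finset.mem_univ, if_true]
    rw [Finset.sum_comm (f := fun x x_1 => if i = x then v (x, x_1) * (starRingEnd ℂ) (B j x_1) else 0)]
    simp [Finset.sum_ite_eq, mul_comm]
  have hsemi : Y * (-Bᴴ) = B * Y := by
    rw [mul_neg, eq_comm, eq_neg_of_add_eq_zero_left key]
  have h3 := semiconj_aeval' hsemi B.charpoly
  rw [aeval_self_charpoly, zero_mul] at h3
  have hdet := det_aeval_ne_zero hB
  have hY0 : Y = 0 := by
    have hunit : IsUnit (aeval (-Bᴴ) B.charpoly).det := hdet.isUnit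
    calc Y = Y * ((aeval (-Bᴴ) B.charpoly) * (aeval (-Bᴴ) B.charpoly)⁻¹) := by
            rw [Matrix.mul_nonsing_inv _ hunit, mul_one]
      _ = (Y * aeval (-Bᴴ) B.charpoly) * (aeval (-Bᴴ) B.charpoly)⁻¹ := by rw [mul_assoc]
      _ = 0 := by rw [h3, zero_mul]
  apply hv0
  funext p
  have := congrFun (congrFun hY0 p.1) p.2
  simpa [hY] using this

/-- If `A` is Hurwitz, then `det(-(A ⊗ I + I ⊗ conj A))` is a strictly positive
real number. -/
theorem det_neg_kronecker_sum_pos (n : ℕ) (A : Matrix (Fin n) (Fin n) ℂ)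
    (hA : IsHurwitz A) :
    ∃ r : ℝ, 0 < r ∧
      (-(A ⊗ₖ (1 : Matrix (Fin n) (Fin n) ℂ) +
        (1 : Matrix (Fin n) (Fin n) ℂ) ⊗ₖ A.map (starRingEnd ℂ))).det = (r : ℂ) := by
  rcases Nat.eq_zero_or_pos n with rfl | hn
  · exact ⟨1, one_pos, by simp⟩
  set W : Matrix (Fin n × Fin n) (Fin n × Fin n) ℂ :=
    A ⊗ₖ (1 : Matrix (Fin n) (Fin n) ℂ) +
      (1 : Matrix (Fin n) (Fin n) ℂ) ⊗ₖ A.map (starRingEnd ℂ) with hW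
  -- real coefficients
  have hmap : W.map (starRingEnd ℂ)
      = reindex (Equiv.prodComm (Fin n) (Fin n)) (Equiv.prodComm (Fin n) (Fin n)) W := by
    ext ⟨i, j⟩ ⟨k, l⟩
    simp [hW, kroneckerMap_apply, one_apply, map_apply, apply_ite (starRingEnd ℂ), mul_comm]
    ring_nf
  have hch : W.charpoly.map (starRingEnd ℂ) = W.charpoly := by
    rw [← charpoly_map, hmap, charpoly_reindex]
  have hlift : W.charpoly ∈ Polynomial.lifts (algebraMap ℝ ℂ) := by
    rw [lifts_iff_coeff_lifts]
    intro k
    have h1 : starRingEnd ℂ (W.charpoly.coeff k) = W.charpoly.coeff k := by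
      conv_rhs => rw [← hch]
      rw [coeff_map]
    exact ⟨(W.charpoly.coeff k).re, Complex.conj_eq_iff_re.mp h1⟩
  obtain ⟨q, hq, hdeg, hmonic⟩ :=
    lifts_and_degree_eq_and_monic hlift W.charpoly_monic
  -- no nonnegative real roots
  have hnoroot : ∀ s : ℝ, 0 ≤ s → q.eval s ≠ 0 := by
    intro s hs h0
    have hevalC : W.charpoly.eval ((s : ℝ) : ℂ) = 0 := by
      rw [← hq]
      have := eval₂_at_apply (algebraMap ℝ ℂ) s (p := q)
      rw [eval_map]
      simpa [h0] using this
    rw [eval_charpoly'] at hevalC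
    set A₂ : Matrix (Fin n) (Fin n) ℂ := A - ((s/2 : ℝ) : ℂ) • 1 with hA₂def
    have hA₂ : IsHurwitz A₂ := by
      intro μ hμ
      have h2 : (μ • 1 - A₂).det = 0 := by
        rw [← eval_charpoly']
        exact (mem_roots A₂.charpoly_monic.ne_zero).mp hμ
      have h3 : ((μ + ((s/2 : ℝ) : ℂ)) • (1 : Matrix (Fin n) (Fin n) ℂ) - A).det = 0 := by
        rw [← h2]
        congr 1
        rw [hA₂def, add_smul]
        abel
      have h4 := isHurwitz_det hA h3
      have h5 : (μ + ((s/2 : ℝ) : ℂ)).re = μ.re + s/2 := by simp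
      rw [h5] at h4
      linarith
    apply det_kroneckerSum_ne_zero hA₂
    have hW2 : A₂ ⊗ₖ (1 : Matrix (Fin n) (Fin n) ℂ) +
        (1 : Matrix (Fin n) (Fin n) ℂ) ⊗ₖ A₂.map (starRingEnd ℂ)
        = -(((s : ℝ) : ℂ) • 1 - W) := by
      ext ⟨i, j⟩ ⟨k, l⟩
      by_cases hik : i = k <;> by_cases hjl : j = l <;>
        simp [hW, hA₂def, kroneckerMap_apply, one_apply, map_apply, Prod.ext_iff, hik, hjl,
          Matrix.smul_apply, Complex.conj_ofReal] <;>
        push_cast [map_ofNat] <;> ring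
    rw [hW2, det_neg, hevalC, mul_zero]
  -- positivity at 0 via monic tendsto and IVT
  have hdegq : 0 < q.degree := by
    rw [hdeg, charpoly_degree_eq_dim]
    simp only [Fintype.card_prod, Fintype.card_fin]
    exact_mod_cast Nat.pos_of_ne_zero (by positivity)
  have htop : Tendsto (fun x => q.eval x) atTop atTop :=
    q.tendsto_atTop_of_leadingCoeff_nonneg hdegq (by rw [hmonic.leadingCoeff]; norm_num)
  obtain ⟨S, hS⟩ := ((htop.eventually_gt_atTop 0).and (eventually_ge_atTop (0:ℝ))).exists
  have hq0 : 0 < q.eval 0 := by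
    rcases lt_trichotomy (q.eval 0) 0 with h | h | h
    · exfalso
      have hsub := intermediate_value_Icc hS.2 (q.continuousOn)
      have : (0:ℝ) ∈ Set.Icc (q.eval 0) (q.eval S) := ⟨le_of_lt h, le_of_lt hS.1⟩
      obtain ⟨x, hx, hx0⟩ := hsub this
      exact hnoroot x hx.1 hx0
    · exact absurd h (hnoroot 0 le_rfl)
    · exact h
  refine ⟨q.eval 0, hq0, ?_⟩
  have hfin : W.charpoly.eval 0 = ((q.eval 0 : ℝ) : ℂ) := by
    rw [← hq]
    have := eval₂_at_apply (algebraMap ℝ ℂ) 0 (p := q)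
    rw [eval_map]
    simpa using this
  rw [eval_charpoly'] at hfin
  rw [← hfin]
  congr 1
  rw [zero_smul, zero_sub]
end

section
/- Let A: 𝕋^L → ℂ^{n×n} be a continuous matrix-valued function on the unit L-circle. Suppose A(1,...,1) is Hurwitz and for every z ∈ 𝕋^L the matrix A(z) ⊗ I_n + I_n ⊗ conj(A(z)) is nonsingular. Then A(z) is Hurwitz for all z ∈ 𝕋^L. -/
set_option maxHeartbeats 1000000

open Kronecker Matrix

/-- The matrix `W(A) = A ⊗ I + I ⊗ conj A`. -/
def kronW {n : ℕ} (A : Matrix (Fin n) (Fin n) ℂ) :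
    Matrix (Fin n × Fin n) (Fin n × Fin n) ℂ :=
  A ⊗ₖ (1 : Matrix (Fin n) (Fin n) ℂ) +
    (1 : Matrix (Fin n) (Fin n) ℂ) ⊗ₖ A.map (starRingEnd ℂ)

/- Auxiliary lemmas -/

lemma aux_eval_charpoly {n : ℕ} (M : Matrix (Fin n) (Fin n) ℂ) (μ : ℂ) :
    M.charpoly.eval μ = (μ • (1 : Matrix (Fin n) (Fin n) ℂ) - M).det := by
  rw [Matrix.charpoly, ← Polynomial.coe_evalRingHom, RingHom.map_det]
  congr 1
  ext i j
  by_cases h : i = j <;>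
    simp [h, Matrix.charmatrix_apply, Matrix.one_apply, Matrix.diagonal_apply,
      Matrix.smul_apply, Matrix.sub_apply, Matrix.map_apply]

lemma aux_mem_roots_charpoly_iff {n : ℕ} (M : Matrix (Fin n) (Fin n) ℂ) (μ : ℂ) :
    μ ∈ M.charpoly.roots ↔ (μ • (1 : Matrix (Fin n) (Fin n) ℂ) - M).det = 0 := by
  rw [Polynomial.mem_roots (M.charpoly_monic.ne_zero), Polynomial.IsRoot,
    aux_eval_charpoly]

/-- Bound on roots of the characteristic polynomial. -/
lemma aux_norm_root_le {n : ℕ} (M : Matrix (Fin n) (Fin n) ℂ) {μ : ℂ}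
    (h : (μ • (1 : Matrix (Fin n) (Fin n) ℂ) - M).det = 0) :
    ‖μ‖ ≤ ∑ i, ∑ j, ‖M i j‖ := by
  obtain ⟨v, hv0, hv⟩ := Matrix.exists_mulVec_eq_zero_iff.mpr h
  have hMv : M *ᵥ v = μ • v := by
    have := hv
    rw [Matrix.sub_mulVec, Matrix.smul_mulVec, Matrix.one_mulVec,
      sub_eq_zero] at this
    exact this.symm
  obtain ⟨j₀, hj₀⟩ := Function.ne_iff.mp hv0
  obtain ⟨i, -, hi⟩ := Finset.exists_max_image Finset.univ (fun i => ‖v i‖)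
    ⟨j₀, Finset.mem_univ _⟩
  have hvi : 0 < ‖v i‖ :=
    lt_of_lt_of_le (norm_pos_iff.mpr hj₀) (hi j₀ (Finset.mem_univ _))
  have key : ‖μ‖ * ‖v i‖ ≤ (∑ i', ∑ j, ‖M i' j‖) * ‖v i‖ := by
    have h1 : ‖μ‖ * ‖v i‖ = ‖(M *ᵥ v) i‖ := by
      rw [hMv]; simp [norm_mul, Pi.smul_apply, smul_eq_mul]
    rw [h1]
    calc ‖(M *ᵥ v) i‖ = ‖∑ j, M i j * v j‖ := by
          simp [Matrix.mulVec, dotProduct]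
      _ ≤ ∑ j, ‖M i j * v j‖ := norm_sum_le _ _
      _ ≤ ∑ j, ‖M i j‖ * ‖v i‖ := by
          refine Finset.sum_le_sum fun j _ => ?_
          rw [norm_mul]
          exact mul_le_mul_of_nonneg_left (hi j (Finset.mem_univ _)) (norm_nonneg _)
      _ = (∑ j, ‖M i j‖) * ‖v i‖ := by rw [Finset.sum_mul]
      _ ≤ (∑ i', ∑ j, ‖M i' j‖) * ‖v i‖ := by
          refine mul_le_mul_of_nonneg_right ?_ (norm_nonneg _)
          exact Finset.single_le_sum (f := fun i' => ∑ j, ‖M i' j‖)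
            (fun i' _ => Finset.sum_nonneg fun j _ => norm_nonneg _) (Finset.mem_univ i)
  exact le_of_mul_le_mul_right key hvi

/-- If `det (kronW M) ≠ 0` then `M` has no eigenvalue on the imaginary axis. -/
lemma aux_re_ne_zero {n : ℕ} (M : Matrix (Fin n) (Fin n) ℂ)
    (hdet : (kronW M).det ≠ 0) {μ : ℂ}
    (hμ : (μ • (1 : Matrix (Fin n) (Fin n) ℂ) - M).det = 0) : μ.re ≠ 0 := by
  intro hre
  obtain ⟨v, hv0, hv⟩ := Matrix.exists_mulVec_eq_zero_iff.mpr hμ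
  have hMv : M *ᵥ v = μ • v := by
    rw [Matrix.sub_mulVec, Matrix.smul_mulVec, Matrix.one_mulVec,
      sub_eq_zero] at hv
    exact hv.symm
  set u : Fin n × Fin n → ℂ := fun p => v p.1 * (starRingEnd ℂ) (v p.2) with hu
  obtain ⟨j₀, hj₀⟩ := Function.ne_iff.mp hv0
  simp only [Pi.zero_apply] at hj₀
  have hu0 : u ≠ 0 := by
    intro hcontra
    have : u (j₀, j₀) = 0 := by rw [hcontra]; rfl
    rw [hu] at this
    simp only [map_eq_zero, mul_eq_zero] at this
    tauto
  have hMvi : ∀ i, ∑ k, M i k * v k = μ * v i := by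
    intro i
    have := congrFun hMv i
    simpa [Matrix.mulVec, dotProduct, Pi.smul_apply, smul_eq_mul] using this
  have hWu : kronW M *ᵥ u = 0 := by
    funext p
    obtain ⟨i, j⟩ := p
    have : (kronW M *ᵥ u) (i, j) =
        ∑ k, ∑ l, (M i k * (1 : Matrix (Fin n) (Fin n) ℂ) j l
          + (1 : Matrix (Fin n) (Fin n) ℂ) i k * (starRingEnd ℂ) (M j l))
          * (v k * (starRingEnd ℂ) (v l)) := by
      simp [kronW, Matrix.mulVec, dotProduct, Fintype.sum_prod_type,
        Matrix.add_apply, Matrix.kroneckerMap_apply, Matrix.map_apply, hu]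
    rw [this]
    have hsplit : ∀ k l, (M i k * (1 : Matrix (Fin n) (Fin n) ℂ) j l
          + (1 : Matrix (Fin n) (Fin n) ℂ) i k * (starRingEnd ℂ) (M j l))
          * (v k * (starRingEnd ℂ) (v l))
        = M i k * (1 : Matrix (Fin n) (Fin n) ℂ) j l * (v k * (starRingEnd ℂ) (v l))
          + (1 : Matrix (Fin n) (Fin n) ℂ) i k * (starRingEnd ℂ) (M j l)
            * (v k * (starRingEnd ℂ) (v l)) := fun k l => by ring
    simp only [hsplit, Finset.sum_add_distrib]
    have hfirst : ∑ k, ∑ l, M i k * (1 : Matrix (Fin n) (Fin n) ℂ) j l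
        * (v k * (starRingEnd ℂ) (v l)) = μ * v i * (starRingEnd ℂ) (v j) := by
      have : ∀ k, ∑ l, M i k * (1 : Matrix (Fin n) (Fin n) ℂ) j l
          * (v k * (starRingEnd ℂ) (v l)) = M i k * v k * (starRingEnd ℂ) (v j) := by
        intro k
        simp [Matrix.one_apply, mul_ite, ite_mul, mul_comm, mul_left_comm, mul_assoc]
      rw [Finset.sum_congr rfl fun k _ => this k]
      rw [← Finset.sum_mul, Finset.sum_congr rfl fun k _ => rfl]
      rw [show (∑ k, M i k * v k) = μ * v i from hMvi i]
    have hsecond : ∑ k, ∑ l, (1 : Matrix (Fin n) (Fin n) ℂ) i k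
        * (starRingEnd ℂ) (M j l) * (v k * (starRingEnd ℂ) (v l))
        = (starRingEnd ℂ) μ * v i * (starRingEnd ℂ) (v j) := by
      have hinner : ∀ l, ∑ k, (1 : Matrix (Fin n) (Fin n) ℂ) i k
          * (starRingEnd ℂ) (M j l) * (v k * (starRingEnd ℂ) (v l))
          = (starRingEnd ℂ) (M j l) * v i * (starRingEnd ℂ) (v l) := by
        intro l
        simp [Matrix.one_apply, mul_ite, ite_mul, mul_comm, mul_left_comm, mul_assoc]
      rw [Finset.sum_comm, Finset.sum_congr rfl fun l _ => hinner l]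
      have : ∑ l, (starRingEnd ℂ) (M j l) * v i * (starRingEnd ℂ) (v l)
          = v i * (starRingEnd ℂ) (∑ l, M j l * v l) := by
        rw [map_sum, Finset.mul_sum]
        exact Finset.sum_congr rfl fun l _ => by rw [map_mul (starRingEnd ℂ)]; ring
      rw [this, hMvi j, map_mul (starRingEnd ℂ)]; ring
    rw [hfirst, hsecond, Pi.zero_apply]
    have hconj : μ + (starRingEnd ℂ) μ = 0 := by
      rw [Complex.add_conj, hre]
      simp
    calc μ * v i * (starRingEnd ℂ) (v j) + (starRingEnd ℂ) μ * v i * (starRingEnd ℂ) (v j)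
        = (μ + (starRingEnd ℂ) μ) * (v i * (starRingEnd ℂ) (v j)) := by ring
      _ = 0 := by rw [hconj, zero_mul]
  exact hdet (Matrix.exists_mulVec_eq_zero_iff.mp ⟨u, hu0, hWu⟩)

lemma aux_norm_multiset_prod (s : Multiset ℂ) :
    ‖s.prod‖ = (s.map fun z => ‖z‖).prod := by
  induction s using Multiset.induction with
  | empty => simp
  | cons a s ih => simp [norm_mul, ih]

lemma aux_pow_card_le_prod (s : Multiset ℝ) (c : ℝ) (hc : 0 ≤ c)
    (h : ∀ x ∈ s, c ≤ x) : c ^ Multiset.card s ≤ s.prod := by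
  induction s using Multiset.induction with
  | empty => simp
  | cons a s ih =>
    have ha := h a (Multiset.mem_cons_self a s)
    have hs := ih fun x hx => h x (Multiset.mem_cons_of_mem hx)
    simp only [Multiset.card_cons, Multiset.prod_cons, pow_succ]
    rw [mul_comm (c ^ Multiset.card s) c]
    exact mul_le_mul ha hs (pow_nonneg hc _) (le_trans hc ha)

/-- Limit of Hurwitz matrices with no limiting eigenvalue on the imaginary axis
is Hurwitz. -/
lemma aux_hurwitz_of_tendsto {n : ℕ} (M : ℕ → Matrix (Fin n) (Fin n) ℂ)
    (M₀ : Matrix (Fin n) (Fin n) ℂ)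
    (hlim : Filter.Tendsto M Filter.atTop (nhds M₀))
    (hH : ∀ k, IsHurwitz (M k))
    (h0 : ∀ μ : ℂ, (μ • (1 : Matrix (Fin n) (Fin n) ℂ) - M₀).det = 0 → μ.re ≠ 0) :
    IsHurwitz M₀ := by
  intro μ hμ
  by_contra hlt
  have hdet : (μ • (1 : Matrix (Fin n) (Fin n) ℂ) - M₀).det = 0 :=
    (aux_mem_roots_charpoly_iff M₀ μ).mp hμ
  have hre : 0 < μ.re := lt_of_le_of_ne (not_lt.mp hlt) (Ne.symm (h0 μ hdet))
  set c : ℝ := min μ.re 1 with hc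
  have hcpos : 0 < c := lt_min hre one_pos
  have hbound : ∀ k, c ^ n ≤ ‖(μ • (1 : Matrix (Fin n) (Fin n) ℂ) - M k).det‖ := by
    intro k
    have hmonic := (M k).charpoly_monic
    have hsplits := IsAlgClosed.splits (k := ℂ) (M k).charpoly
    have hprod := hsplits.eq_prod_roots_of_monic hmonic
    have heval : (M k).charpoly.eval μ
        = ((M k).charpoly.roots.map fun a => μ - a).prod := by
      conv_lhs => rw [hprod]
      rw [Polynomial.eval_multiset_prod, Multiset.map_map]
      congr 1
      ext a
      simp
    have hcard : Multiset.card (M k).charpoly.roots = n := by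
      rw [Polynomial.splits_iff_card_roots.mp hsplits,
        Matrix.charpoly_natDegree_eq_dim, Fintype.card_fin]
    have hnorm : ‖(M k).charpoly.eval μ‖
        = (((M k).charpoly.roots.map fun a => μ - a).map fun z => ‖z‖).prod := by
      rw [heval, aux_norm_multiset_prod]
    have hge : c ^ n ≤ ‖(M k).charpoly.eval μ‖ := by
      rw [hnorm]
      have hcard2 : Multiset.card (((M k).charpoly.roots.map fun a => μ - a).map
          fun z => ‖z‖) = n := by
        simp [hcard]
      calc c ^ n = c ^ Multiset.card (((M k).charpoly.roots.map fun a => μ - a).map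
            fun z => ‖z‖) := by rw [hcard2]
        _ ≤ _ := by
          refine aux_pow_card_le_prod _ c hcpos.le fun x hx => ?_
          rw [Multiset.mem_map] at hx
          obtain ⟨w, hw, rfl⟩ := hx
          rw [Multiset.mem_map] at hw
          obtain ⟨a, ha, rfl⟩ := hw
          have haroot := hH k a ha
          have h1 : c ≤ (μ - a).re := by
            rw [Complex.sub_re]
            have := min_le_left μ.re 1
            linarith
          calc c ≤ (μ - a).re := h1
            _ ≤ ‖μ - a‖ := Complex.re_le_norm _
    rwa [aux_eval_charpoly] at hge
  have hcont : Filter.Tendsto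
      (fun k => ‖(μ • (1 : Matrix (Fin n) (Fin n) ℂ) - M k).det‖)
      Filter.atTop (nhds ‖(μ • (1 : Matrix (Fin n) (Fin n) ℂ) - M₀).det‖) := by
    have h1 : Continuous fun N : Matrix (Fin n) (Fin n) ℂ =>
        ‖(μ • (1 : Matrix (Fin n) (Fin n) ℂ) - N).det‖ :=
      ((continuous_const.sub continuous_id).matrix_det).norm
    exact (h1.tendsto M₀).comp hlim
  rw [hdet, norm_zero] at hcont
  have : c ^ n ≤ 0 := ge_of_tendsto' hcont hbound
  exact absurd this (not_le.mpr (pow_pos hcpos n))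

/-- Limit of non-Hurwitz matrices is non-Hurwitz. -/
lemma aux_not_hurwitz_of_tendsto {n : ℕ} (M : ℕ → Matrix (Fin n) (Fin n) ℂ)
    (M₀ : Matrix (Fin n) (Fin n) ℂ)
    (hlim : Filter.Tendsto M Filter.atTop (nhds M₀))
    (hN : ∀ k, ¬ IsHurwitz (M k)) : ¬ IsHurwitz M₀ := by
  have hex : ∀ k, ∃ μ : ℂ, μ ∈ (M k).charpoly.roots ∧ 0 ≤ μ.re := by
    intro k
    have := hN k
    rw [IsHurwitz] at this
    push_neg at this
    obtain ⟨μ, hμ, hre⟩ := this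
    exact ⟨μ, hμ, hre⟩
  choose μs hroot hre using hex
  -- bound on the roots
  have hgcont : Continuous fun N : Matrix (Fin n) (Fin n) ℂ => ∑ i, ∑ j, ‖N i j‖ := by
    refine continuous_finset_sum _ fun i _ => continuous_finset_sum _ fun j _ => ?_
    exact ((continuous_apply j).comp (continuous_apply i)).norm
  have hgtend : Filter.Tendsto (fun k => ∑ i, ∑ j, ‖M k i j‖) Filter.atTop
      (nhds (∑ i, ∑ j, ‖M₀ i j‖)) := (hgcont.tendsto M₀).comp hlim
  obtain ⟨B, hB⟩ := hgtend.bddAbove_range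
  have hμB : ∀ k, μs k ∈ Metric.closedBall (0 : ℂ) B := by
    intro k
    rw [Metric.mem_closedBall, dist_zero_right]
    refine le_trans (aux_norm_root_le (M k)
      ((aux_mem_roots_charpoly_iff (M k) (μs k)).mp (hroot k))) ?_
    exact hB ⟨k, rfl⟩
  obtain ⟨μ, -, φ, hφ, hconv⟩ :=
    (isCompact_closedBall (0 : ℂ) B).tendsto_subseq hμB
  have hre0 : 0 ≤ μ.re := by
    have h1 : Filter.Tendsto (fun k => (μs (φ k)).re) Filter.atTop (nhds μ.re) :=
      (Complex.continuous_re.tendsto μ).comp hconv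
    exact ge_of_tendsto' h1 fun k => hre (φ k)
  have hdet0 : (μ • (1 : Matrix (Fin n) (Fin n) ℂ) - M₀).det = 0 := by
    have hmat : Filter.Tendsto
        (fun k => (μs (φ k)) • (1 : Matrix (Fin n) (Fin n) ℂ) - M (φ k))
        Filter.atTop (nhds (μ • (1 : Matrix (Fin n) (Fin n) ℂ) - M₀)) :=
      (hconv.smul tendsto_const_nhds).sub (hlim.comp hφ.tendsto_atTop)
    have h2 : Filter.Tendsto (fun k =>
        ((μs (φ k)) • (1 : Matrix (Fin n) (Fin n) ℂ) - M (φ k)).det) Filter.atTop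
        (nhds ((μ • (1 : Matrix (Fin n) (Fin n) ℂ) - M₀).det)) :=
      ((continuous_id.matrix_det).tendsto _).comp hmat
    have h3 : ∀ k, ((μs (φ k)) • (1 : Matrix (Fin n) (Fin n) ℂ) - M (φ k)).det = 0 :=
      fun k => (aux_mem_roots_charpoly_iff (M (φ k)) (μs (φ k))).mp (hroot (φ k))
    have h4 : Filter.Tendsto (fun _ : ℕ => (0 : ℂ)) Filter.atTop
        (nhds ((μ • (1 : Matrix (Fin n) (Fin n) ℂ) - M₀).det)) := by
      simpa [h3] using h2
    exact tendsto_nhds_unique h4 tendsto_const_nhds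
  intro hH
  have := hH μ ((aux_mem_roots_charpoly_iff M₀ μ).mpr hdet0)
  linarith

/-- If `A` is continuous on `𝕋^L`, `A(1,...,1)` is Hurwitz and
`A(z) ⊗ I + I ⊗ conj (A z)` is nonsingular for all `z ∈ 𝕋^L`, then `A(z)` is
Hurwitz for every `z ∈ 𝕋^L`. -/
theorem hurwitz_on_torus_of_nonsingular (L n : ℕ)
    (A : (Fin L → ℂ) → Matrix (Fin n) (Fin n) ℂ)
    (hA : ContinuousOn A {z | ∀ i, ‖z i‖ = 1})
    (h1 : IsHurwitz (A fun _ => 1))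
    (hns : ∀ z : Fin L → ℂ, (∀ i, ‖z i‖ = 1) → (kronW (A z)).det ≠ 0) :
    ∀ z : Fin L → ℂ, (∀ i, ‖z i‖ = 1) → IsHurwitz (A z) := by
  set T : Set (Fin L → ℂ) := {z | ∀ i, ‖z i‖ = 1} with hTdef
  have hTpre : IsPreconnected T := by
    have hTeq : T = Set.pi Set.univ (fun _ : Fin L => Metric.sphere (0 : ℂ) 1) := by
      ext z
      simp [hTdef, Set.mem_pi, mem_sphere_zero_iff_norm]
    rw [hTeq]
    refine isPreconnected_univ_pi fun i => ?_
    refine (isConnected_sphere ?_ 0 zero_le_one).isPreconnected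
    rw [Complex.rank_real_complex]
    norm_num
  haveI : PreconnectedSpace T := Subtype.preconnectedSpace hTpre
  set S : Set T := {x | IsHurwitz (A x.val)} with hSdef
  have hAseq : ∀ (x : ℕ → T) (p : T), Filter.Tendsto x Filter.atTop (nhds p) →
      Filter.Tendsto (fun k => A (x k).val) Filter.atTop (nhds (A p.val)) := by
    intro x p hx
    have hval : Filter.Tendsto (fun k => (x k).val) Filter.atTop
        (nhdsWithin p.val T) := by
      rw [tendsto_nhdsWithin_iff]
      exact ⟨(continuous_subtype_val.tendsto p).comp hx,
        Filter.Eventually.of_forall fun k => (x k).2⟩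
    exact (hA p.val p.2).tendsto.comp hval
  have hSclosed : IsClosed S := by
    refine IsSeqClosed.isClosed ?_
    intro x p hmem hx
    exact aux_hurwitz_of_tendsto (fun k => A (x k).val) (A p.val) (hAseq x p hx)
      (fun k => hmem k) (fun μ hdet => aux_re_ne_zero (A p.val) (hns p.val p.2) hdet)
  have hScclosed : IsClosed Sᶜ := by
    refine IsSeqClosed.isClosed ?_
    intro x p hmem hx
    exact aux_not_hurwitz_of_tendsto (fun k => A (x k).val) (A p.val) (hAseq x p hx)
      (fun k => hmem k)
  have hclopen : IsClopen S := ⟨hSclosed, isClosed_compl_iff.mp hScclosed⟩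
  have h1mem : (fun _ : Fin L => (1 : ℂ)) ∈ T := fun i => norm_one
  rcases isClopen_iff.mp hclopen with hempty | huniv
  · exfalso
    have : (⟨fun _ => 1, h1mem⟩ : T) ∈ S := h1
    rw [hempty] at this
    exact this
  · intro z hz
    have : (⟨z, hz⟩ : T) ∈ S := by rw [huniv]; trivial
    exact this
end
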